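/- If f : Z_p → Q_p is continuous, then its Mahler coefficients a_n = ∑_{k=0}^{n} (-1)^{n-k} C(n,k) f(k) satisfy |a_n|_p → 0 as n → ∞, and f(x) = ∑_{n=0}^∞ a_n · C(x,n) for all x ∈ Z_p, where C(x,n) = x(x-1)···(x-n+1)/n!. -/

import Mathlib

/-!
The coefficients `aₙ` are the iterated forward differences `Δⁿf(0)` (expand `(shift - 1)ⁿ` by
the binomial theorem), and on `ℤ_[p]` the binomial polynomial `C(x, n)` is `Ring.choose x n`.
Both claims are then Mahler's theorem (`PadicInt.fwdDiff_tendsto_zero`, `PadicInt.hasSum_mahler`)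
evaluated at `x`.
-/

open scoped fwdDiff
open Finset

/-- The binomial polynomial C(x, n) = x(x-1)⋯(x-n+1)/n! evaluated at x ∈ ℚ_p. -/
noncomputable def binomPoly (p : ℕ) [Fact p.Prime] (x : ℚ_[p]) (n : ℕ) : ℚ_[p] :=
  (∏ i ∈ Finset.range n, (x - (i : ℚ_[p]))) / (n.factorial : ℚ_[p])

theorem Ring.choose_eq_prod_range_div {K : Type*} [Field K] [CharZero K] (x : K) (n : ℕ) :
    Ring.choose x n = (∏ i ∈ range n, (x - i)) / n.factorial := by
  rw [Ring.choose_eq_smul, ← Polynomial.aeval_eq_smeval, Polynomial.aeval_def,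
    Polynomial.eval₂_eq_eval_map, descPochhammer_map, descPochhammer_eval_eq_prod_range,
    smul_eq_mul, inv_mul_eq_div]

theorem fwdDiff_iter_one_apply_zero_eq_sum {M S : Type*} [AddCommMonoidWithOne M] [Ring S]
    (f : M → S) (n : ℕ) :
    (Δ_[1])^[n] f 0 = ∑ k ∈ range (n + 1), (-1 : S) ^ (n - k) * n.choose k * f k := by
  rw [fwdDiff_iter_eq_sum_shift]
  refine sum_congr rfl fun k _ ↦ ?_
  simp [zsmul_eq_mul]

namespace PadicInt

variable {p : ℕ} [Fact p.Prime]

instance isBoundedSMul_padic : IsBoundedSMul ℤ_[p] ℚ_[p] :=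
  IsBoundedSMul.of_norm_smul_le fun r x ↦ (norm_mul (r : ℚ_[p]) x).le

theorem coe_choose_eq_binomPoly (x : ℤ_[p]) (n : ℕ) :
    ((Ring.choose x n : ℤ_[p]) : ℚ_[p]) = binomPoly p x n := by
  rw [binomPoly, ← Ring.choose_eq_prod_range_div]
  exact Ring.map_choose Coe.ringHom x n

theorem hasSum_mahler_apply {E : Type*} [NormedAddCommGroup E] [Module ℤ_[p] E]
    [IsBoundedSMul ℤ_[p] E] [IsUltrametricDist E] [CompleteSpace E]
    (f : C(ℤ_[p], E)) (x : ℤ_[p]) :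
    HasSum (fun n ↦ Ring.choose x n • (Δ_[1])^[n] f 0) (f x) := by
  simpa only [mahlerTerm_apply, mahler_apply] using ContinuousMap.hasSum_apply (hasSum_mahler f) x

end PadicInt

/-- Mahler's theorem: if f : ℤ_p → ℚ_p is continuous, its Mahler coefficients
aₙ = ∑_{k=0}^n (-1)^(n-k) C(n,k) f(k) tend to 0 in norm, and
f(x) = ∑ₙ aₙ · C(x,n) for all x ∈ ℤ_p. -/
theorem stmt_16 (p : ℕ) [Fact p.Prime] (f : ℤ_[p] → ℚ_[p]) (hf : Continuous f)
    (a : ℕ → ℚ_[p])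
    (ha : ∀ n, a n = ∑ k ∈ Finset.range (n + 1),
      (-1 : ℚ_[p]) ^ (n - k) * (n.choose k : ℚ_[p]) * f (k : ℤ_[p])) :
    Filter.Tendsto (fun n => ‖a n‖) Filter.atTop (nhds 0) ∧
    ∀ x : ℤ_[p], HasSum (fun n => a n * binomPoly p (x : ℚ_[p]) n) (f x) := by
  let F : C(ℤ_[p], ℚ_[p]) := ⟨f, hf⟩
  obtain rfl : a = fun n ↦ (Δ_[1])^[n] F 0 := funext fun n ↦ by
    rw [ha, fwdDiff_iter_one_apply_zero_eq_sum]
    rfl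
  refine ⟨by simpa using (PadicInt.fwdDiff_tendsto_zero F).norm, fun x ↦ ?_⟩
  have h := PadicInt.hasSum_mahler_apply F x
  simp only [Algebra.smul_def, PadicInt.algebraMap_apply, PadicInt.coe_choose_eq_binomPoly,
    mul_comm (binomPoly _ _ _)] at h
  exact h
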